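/- arXiv:2602.08122 — 4 statements merged into one kernel-verified Lean document; each statement's English description precedes it below -/
import Mathlib

section
/- Let M, n ∈ ℕ with 1 ≤ n ≤ M and let s : Fin n → Fin M be strictly monotone. Then there exists a finitely supported function c : (Fin n → ℕ) → ℕ, depending only on M, n and s, such that (i) c(p) ≠ 0 implies that p_j + n ≤ M for all j ∈ Fin n and that ∑_j p_j = ∑_i (s_i − i), and (ii) for every matrix A ∈ ℂ^{M×n}, det(A.submatrix s id) = ∑_p c(p) · det(B_p), where B_p is the n×n matrix whose (i,j) entry is A(p_j + i, j) for 0-indexed i ∈ {0,…,n−1}. In other words, every maximal minor of A with row set given by s is a nonnegative-integer linear combination, with coefficients independent of A, of row-consecutive n-minors of A. -/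
open MvPolynomial Matrix Finset

namespace Stmt0

noncomputable def alt (n : ℕ) (β : Fin n → ℕ) : MvPolynomial (Fin n) ℤ :=
  (Matrix.of fun i j : Fin n => (X j : MvPolynomial (Fin n) ℤ) ^ β i).det

lemma geom_aux {S : Type*} [CommRing S] (x y : S) (a b e : ℕ) (hab : a ≤ b) :
    (∑ t ∈ Finset.Icc a b, y ^ (t + e) * x ^ (b - t)) * (x - y)
      = y ^ (a + e) * x ^ (b - a + 1) - y ^ (b + 1 + e) := by
  set N := b + 1 - a with hN
  have h2 : (∑ t ∈ Finset.Icc a b, y ^ (t + e) * x ^ (b - t))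
      = y ^ (a + e) * ∑ k ∈ Finset.range N, y ^ k * x ^ (N - 1 - k) := by
    rw [← Finset.Ico_add_one_right_eq_Icc, Finset.sum_Ico_eq_sum_range, Finset.mul_sum]
    apply Finset.sum_congr rfl
    intro k hk
    rw [show a + k + e = (a + e) + k by omega, show b - (a + k) = N - 1 - k by omega,
      pow_add, mul_assoc]
  have hgeom := geom_sum₂_mul y x N
  have e1 : b - a + 1 = N := by omega
  have e2 : b + 1 + e = (a + e) + N := by omega
  rw [h2, e1, e2, pow_add y (a+e) N]
  linear_combination (-(y^(a+e))) * hgeom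


noncomputable def Amat (m : ℕ) (g : ℕ → ℕ) (k : ℕ) :
    Matrix (Fin (m+1)) (Fin (m+1)) (MvPolynomial (Fin (m+1)) ℤ) :=
  Matrix.of fun i j =>
    if (i : ℕ) < k ∧ (i : ℕ) < m then
      X (Fin.last m) ^ (g ((i : ℕ)+1) - g (i : ℕ) + 1) * X j ^ (g (i : ℕ) + (i : ℕ))
        - X j ^ (g ((i : ℕ)+1) + ((i : ℕ)+1))
    else X j ^ (g (i : ℕ) + (i : ℕ))

lemma Amat_zero (m : ℕ) (g : ℕ → ℕ) :
    Amat m g 0 = Matrix.of fun (i j : Fin (m+1)) =>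
      (X j : MvPolynomial (Fin (m+1)) ℤ) ^ (g (i : ℕ) + (i : ℕ)) := by
  ext i j
  simp only [Amat, Matrix.of_apply]
  rw [if_neg (by omega)]

lemma L1a (m : ℕ) (g : ℕ → ℕ) :
    ∀ k, k ≤ m → (Amat m g k).det
      = X (Fin.last m) ^ (∑ t ∈ Finset.range k, (g (t+1) - g t + 1)) * (Amat m g 0).det := by
  intro k
  induction k with
  | zero => intro _; simp
  | succ k ih =>
    intro hk
    have hkm : k < m := hk
    set S := MvPolynomial (Fin (m+1)) ℤ
    have hkof : ∃ kf : Fin (m+1), (kf : ℕ) = k := ⟨⟨k, by omega⟩, rfl⟩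
    obtain ⟨kf, hkf⟩ := hkof
    obtain ⟨kf1, hkf1⟩ : ∃ kf1 : Fin (m+1), (kf1 : ℕ) = k + 1 := ⟨⟨k+1, by omega⟩, rfl⟩
    set u : Fin (m+1) → S := fun j => X j ^ (g k + k) with hu_def
    set v : Fin (m+1) → S := fun j => X j ^ (g (k+1) + (k+1)) with hv_def
    set dkp : S := X (Fin.last m) ^ (g (k+1) - g k + 1) with hdkp_def
    have hA : Amat m g (k+1)
        = Matrix.updateRow (Amat m g k) kf (dkp • u + (-1 : S) • v) := by
      ext i j
      rw [Matrix.updateRow_apply]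
      by_cases hik : i = kf
      · subst hik
        rw [if_pos rfl]
        simp only [Amat, Matrix.of_apply]
        rw [if_pos (by omega), hkf]
        simp only [Pi.add_apply, Pi.smul_apply, smul_eq_mul, hu_def, hv_def, hdkp_def,
          neg_one_mul, ← sub_eq_add_neg]
      · rw [if_neg hik]
        have hvk : (i : ℕ) ≠ k := fun h => hik (Fin.ext (by omega))
        simp only [Amat, Matrix.of_apply]
        by_cases h2 : (i : ℕ) < k ∧ (i : ℕ) < m
        · rw [if_pos (by omega), if_pos h2]
        · rw [if_neg (by omega), if_neg h2]
    have hrowu : (Amat m g k) kf = u := by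
      funext j
      simp only [Amat, Matrix.of_apply]
      rw [if_neg (by omega), hkf]
    have hdet : (Amat m g (k+1)).det
        = dkp * (Amat m g k).det + (-1 : S) * (Matrix.updateRow (Amat m g k) kf v).det := by
      rw [hA, Matrix.det_updateRow_add, Matrix.det_updateRow_smul, Matrix.det_updateRow_smul]
      rw [← hrowu, Matrix.updateRow_eq_self]
    have hne : kf ≠ kf1 := fun h => by rw [h] at hkf; omega
    have hv0 : (Matrix.updateRow (Amat m g k) kf v).det = 0 := by
      apply Matrix.det_zero_of_row_eq hne
      rw [Matrix.updateRow_self, Matrix.updateRow_ne (Ne.symm hne)]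
      funext j
      simp only [Amat, Matrix.of_apply]
      rw [if_neg (by omega), hkf1]
    rw [hdet, hv0, ih (by omega), Finset.sum_range_succ, pow_add]
    ring


noncomputable def Rp (m : ℕ) (g : ℕ → ℕ) :
    Matrix (Fin m) (Fin m) (MvPolynomial (Fin (m+1)) ℤ) :=
  Matrix.of fun i j =>
    X (Fin.last m) ^ (g ((i : ℕ)+1) - g (i : ℕ) + 1) * X j.castSucc ^ (g (i : ℕ) + (i : ℕ))
      - X j.castSucc ^ (g ((i : ℕ)+1) + ((i : ℕ)+1))

noncomputable def Rmat (m : ℕ) (g : ℕ → ℕ) :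
    Matrix (Fin m) (Fin m) (MvPolynomial (Fin (m+1)) ℤ) :=
  Matrix.of fun i j =>
    ∑ t ∈ Finset.Icc (g (i : ℕ)) (g ((i : ℕ)+1)),
      X j.castSucc ^ (t + (i : ℕ)) * X (Fin.last m) ^ (g ((i : ℕ)+1) - t)

lemma L1b (m : ℕ) (g : ℕ → ℕ) (hg : ∀ t, g t ≤ g (t+1)) :
    (Amat m g m).det = X (Fin.last m) ^ (g m + m) * (Rp m g).det := by
  rw [Matrix.det_succ_column (Amat m g m) (Fin.last m)]
  rw [Finset.sum_eq_single_of_mem (Fin.last m) (Finset.mem_univ _)]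
  · have h1 : Amat m g m (Fin.last m) (Fin.last m)
        = X (Fin.last m) ^ (g m + m) := by
      simp only [Amat, Matrix.of_apply]
      rw [if_neg (by simp [Fin.val_last])]
      simp [Fin.val_last]
    have h2 : ((-1 : MvPolynomial (Fin (m+1)) ℤ)) ^ ((Fin.last m : ℕ) + (Fin.last m : ℕ)) = 1 := by
      simp only [Fin.val_last]
      rw [← two_mul, pow_mul, neg_one_sq, one_pow]
    rw [h1, h2, one_mul]
    congr 1
    apply congrArg
    refine Matrix.ext fun i j => ?_
    simp only [Matrix.submatrix_apply, Fin.succAbove_last, Rp, Matrix.of_apply, Amat]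
    rw [if_pos (by simp only [Fin.coe_castSucc]; omega)]
    simp only [Fin.coe_castSucc]
  · intro i _ hi
    have hiv : (i : ℕ) < m := by
      have := i.isLt
      have : (i : ℕ) ≠ m := fun h => hi (Fin.ext (by simp [Fin.val_last, h]))
      omega
    have hzero : Amat m g m i (Fin.last m) = 0 := by
      simp only [Amat, Matrix.of_apply]
      rw [if_pos ⟨hiv, hiv⟩, ← pow_add,
        show g ((i:ℕ)+1) - g (i:ℕ) + 1 + (g (i:ℕ) + (i:ℕ)) = g ((i:ℕ)+1) + ((i:ℕ)+1) by
          have := hg (i : ℕ); omega, sub_self]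
    rw [hzero]
    ring

lemma L2 (m : ℕ) (g : ℕ → ℕ) (hg : ∀ t, g t ≤ g (t+1)) :
    (Rp m g).det = (Rmat m g).det * ∏ j : Fin m, (X (Fin.last m) - X j.castSucc) := by
  have hmat : Rp m g = Rmat m g * Matrix.diagonal (fun j : Fin m => X (Fin.last m) - X j.castSucc) := by
    refine Matrix.ext fun i j => ?_
    rw [Matrix.mul_diagonal]
    show Rp m g i j = Rmat m g i j * _
    simp only [Rp, Rmat, Matrix.of_apply]
    rw [geom_aux _ _ _ _ _ (hg (i : ℕ)),
      show g ((i:ℕ)+1) + ((i:ℕ)+1) = g ((i:ℕ)+1) + 1 + (i:ℕ) by omega]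
    ring
  rw [hmat, Matrix.det_mul, Matrix.det_diagonal]

lemma L3 (m : ℕ) (g : ℕ → ℕ) :
    (Rmat m g).det
      = ∑ r ∈ Fintype.piFinset (fun i : Fin m => Finset.Icc (g (i : ℕ)) (g ((i : ℕ)+1))),
          X (Fin.last m) ^ (∑ i : Fin m, (g ((i : ℕ)+1) - r i)) *
            rename (Fin.castSucc : Fin m → Fin (m+1)) (alt m (fun i => r i + (i : ℕ))) := by
  set S := MvPolynomial (Fin (m+1)) ℤ
  have hrows : (Rmat m g : Matrix (Fin m) (Fin m) S)
      = fun (i : Fin m) => ∑ t ∈ Finset.Icc (g (i : ℕ)) (g ((i : ℕ)+1)),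
          (X (Fin.last m) ^ (g ((i : ℕ)+1) - t) : S) • (fun j : Fin m => (X j.castSucc : S) ^ (t + (i : ℕ))) := by
    funext i j
    simp only [Rmat, Matrix.of_apply, Finset.sum_apply, Pi.smul_apply, smul_eq_mul]
    exact Finset.sum_congr rfl fun t _ => mul_comm _ _
  have hdet : (Rmat m g).det = Matrix.detRowAlternating (Rmat m g) := rfl
  rw [hdet, hrows]
  have hmsf := (Matrix.detRowAlternating (n := Fin m) (R := S)).toMultilinearMap.map_sum_finset
    (g := fun i t => (X (Fin.last m) ^ (g ((i : ℕ)+1) - t) : S) • (fun j : Fin m => (X j.castSucc : S) ^ (t + (i : ℕ))))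
    (A := fun i => Finset.Icc (g (i : ℕ)) (g ((i : ℕ)+1)))
  simp only [AlternatingMap.coe_multilinearMap] at hmsf
  rw [hmsf]
  apply Finset.sum_congr rfl
  intro r _
  have hsmul := (Matrix.detRowAlternating (n := Fin m) (R := S)).toMultilinearMap.map_smul_univ
    (fun i => (X (Fin.last m) ^ (g ((i : ℕ)+1) - r i) : S))
    (fun i => (fun j : Fin m => (X j.castSucc : S) ^ (r i + (i : ℕ))))
  simp only [AlternatingMap.coe_multilinearMap] at hsmul
  rw [hsmul, Finset.prod_pow_eq_pow_sum, smul_eq_mul]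
  congr 1
  have hren : (Matrix.of fun (i j : Fin m) => (X j.castSucc : S) ^ (r i + (i : ℕ)))
      = (MvPolynomial.rename (Fin.castSucc : Fin m → Fin (m+1))).toRingHom.mapMatrix
          (Matrix.of fun (i j : Fin m) => (X j : MvPolynomial (Fin m) ℤ) ^ (r i + (i : ℕ))) := by
    refine Matrix.ext fun i j => ?_
    simp only [Matrix.of_apply, RingHom.mapMatrix_apply, Matrix.map_apply, AlgHom.toRingHom_eq_coe,
      RingHom.coe_coe, map_pow, rename_X]
  show Matrix.detRowAlternating (fun i => (fun j : Fin m => (X j.castSucc : S) ^ (r i + (i : ℕ)))) = _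
  have : (fun i => (fun j : Fin m => (X j.castSucc : S) ^ (r i + (i : ℕ))))
      = (Matrix.of fun (i j : Fin m) => (X j.castSucc : S) ^ (r i + (i : ℕ))) := rfl
  rw [this, show (Matrix.detRowAlternating (Matrix.of fun (i j : Fin m) => (X j.castSucc : S) ^ (r i + (i : ℕ)))) = (Matrix.of fun (i j : Fin m) => (X j.castSucc : S) ^ (r i + (i : ℕ))).det from rfl, hren,
    ← RingHom.map_det]
  rfl

lemma key (m : ℕ) (g : ℕ → ℕ) (hg : ∀ t, g t ≤ g (t+1)) :
    alt (m+1) (fun i => g (i : ℕ) + (i : ℕ))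
      = ∑ r ∈ Fintype.piFinset (fun i : Fin m => Finset.Icc (g (i : ℕ)) (g ((i : ℕ)+1))),
          X (Fin.last m) ^ ((∑ i : Fin (m+1), g (i : ℕ)) - ∑ i : Fin m, r i) *
            ((∏ j : Fin m, (X (Fin.last m) - X j.castSucc)) *
              rename (Fin.castSucc : Fin m → Fin (m+1)) (alt m (fun i => r i + (i : ℕ)))) := by
  classical
  set S := MvPolynomial (Fin (m+1)) ℤ
  set D := ∑ t ∈ Finset.range m, (g (t+1) - g t + 1) with hD
  set E := g m + m with hE
  have hA0 : (Amat m g 0).det = alt (m+1) (fun i => g (i : ℕ) + (i : ℕ)) := by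
    rw [Amat_zero]; rfl
  -- arithmetic facts
  have hSg : D + (∑ t ∈ Finset.range m, g t) = (∑ t ∈ Finset.range m, g (t+1)) + m := by
    have h1 : ∑ t ∈ Finset.range m, ((g (t+1) - g t + 1) + g t)
        = ∑ t ∈ Finset.range m, (g (t+1) + 1) :=
      Finset.sum_congr rfl fun t _ => by have := hg t; omega
    rw [Finset.sum_add_distrib] at h1
    have h2 : ∑ t ∈ Finset.range m, (g (t+1) + 1) = (∑ t ∈ Finset.range m, g (t+1)) + m := by
      rw [Finset.sum_add_distrib]; simp
    omega
  have hfin0 : (∑ i : Fin m, g (i : ℕ)) = ∑ t ∈ Finset.range m, g t :=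
    Fin.sum_univ_eq_sum_range (fun t => g t) m
  have hfin1 : (∑ i : Fin m, g ((i : ℕ)+1)) = ∑ t ∈ Finset.range m, g (t+1) :=
    Fin.sum_univ_eq_sum_range (fun t => g (t+1)) m
  have hfull : (∑ i : Fin (m+1), g (i : ℕ)) = (∑ t ∈ Finset.range m, g t) + g m := by
    rw [Fin.sum_univ_castSucc]
    simp [hfin0]
  have hchain : (X (Fin.last m) : S) ^ D * alt (m+1) (fun i => g (i : ℕ) + (i : ℕ))
      = ∑ r ∈ Fintype.piFinset (fun i : Fin m => Finset.Icc (g (i : ℕ)) (g ((i : ℕ)+1))),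
          X (Fin.last m) ^ E * (X (Fin.last m) ^ (∑ i : Fin m, (g ((i : ℕ)+1) - r i)) *
            rename (Fin.castSucc : Fin m → Fin (m+1)) (alt m (fun i => r i + (i : ℕ))) *
            ∏ j : Fin m, (X (Fin.last m) - X j.castSucc)) := by
    rw [← hA0, ← L1a m g m le_rfl, L1b m g hg, L2 m g hg, L3 m g, Finset.sum_mul,
      Finset.mul_sum]
  have hXne : (X (Fin.last m) : S) ^ D ≠ 0 := pow_ne_zero _ (X_ne_zero _)
  apply mul_left_cancel₀ hXne
  rw [hchain, Finset.mul_sum]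
  apply Finset.sum_congr rfl
  intro r hr
  rw [Fintype.mem_piFinset] at hr
  have hrlo : ∀ i : Fin m, g (i : ℕ) ≤ r i := fun i => (Finset.mem_Icc.mp (hr i)).1
  have hrhi : ∀ i : Fin m, r i ≤ g ((i : ℕ)+1) := fun i => (Finset.mem_Icc.mp (hr i)).2
  have hsub : (∑ i : Fin m, (g ((i : ℕ)+1) - r i)) + (∑ i : Fin m, r i)
      = ∑ i : Fin m, g ((i : ℕ)+1) := by
    rw [← Finset.sum_add_distrib]
    exact Finset.sum_congr rfl fun i _ => by have := hrhi i; omega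
  have hlo : (∑ i : Fin m, g (i : ℕ)) ≤ ∑ i : Fin m, r i :=
    Finset.sum_le_sum fun i _ => hrlo i
  have hhi : (∑ i : Fin m, r i) ≤ ∑ i : Fin m, g ((i : ℕ)+1) :=
    Finset.sum_le_sum fun i _ => hrhi i
  have hfull2 : (∑ i : Fin (m+1), g (i : ℕ)) = g 0 + ∑ i : Fin m, g ((i : ℕ)+1) := by
    rw [Fin.sum_univ_succ]
    simp [Fin.val_succ]
  have hexp : E + (∑ i : Fin m, (g ((i : ℕ)+1) - r i))
      = D + ((∑ i : Fin (m+1), g (i : ℕ)) - ∑ i : Fin m, r i) := by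
    omega
  have h5 : (X (Fin.last m) : S) ^ E * (X (Fin.last m) ^ (∑ i : Fin m, (g ((i : ℕ)+1) - r i)) *
        rename (Fin.castSucc : Fin m → Fin (m+1)) (alt m (fun i => r i + (i : ℕ))) *
        ∏ j : Fin m, (X (Fin.last m) - X j.castSucc))
      = X (Fin.last m) ^ (E + (∑ i : Fin m, (g ((i : ℕ)+1) - r i))) *
        (rename (Fin.castSucc : Fin m → Fin (m+1)) (alt m (fun i => r i + (i : ℕ))) *
          ∏ j : Fin m, (X (Fin.last m) - X j.castSucc)) := by
    rw [pow_add]; ring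
  have h6 : (X (Fin.last m) : S) ^ D * (X (Fin.last m) ^ ((∑ i : Fin (m+1), g (i : ℕ)) - ∑ i : Fin m, r i) *
        ((∏ j : Fin m, (X (Fin.last m) - X j.castSucc)) *
          rename (Fin.castSucc : Fin m → Fin (m+1)) (alt m (fun i => r i + (i : ℕ)))))
      = X (Fin.last m) ^ (D + ((∑ i : Fin (m+1), g (i : ℕ)) - ∑ i : Fin m, r i)) *
        (rename (Fin.castSucc : Fin m → Fin (m+1)) (alt m (fun i => r i + (i : ℕ))) *
          ∏ j : Fin m, (X (Fin.last m) - X j.castSucc)) := by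
    rw [pow_add]; ring
  rw [h5, h6, hexp]
lemma alt_zero (f : Fin 0 → ℕ) : alt 0 f = 1 := Matrix.det_fin_zero

lemma rename_coeff_nonneg (m : ℕ) (Q : MvPolynomial (Fin m) ℤ)
    (hQ : ∀ u, 0 ≤ coeff u Q) (v : Fin (m+1) →₀ ℕ) :
    0 ≤ coeff v (rename (Fin.castSucc : Fin m → Fin (m+1)) Q) := by
  by_cases h : coeff v (rename (Fin.castSucc : Fin m → Fin (m+1)) Q) = 0
  · rw [h]
  · obtain ⟨u, hu, -⟩ := coeff_rename_ne_zero _ _ _ h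
    rw [← hu, coeff_rename_mapDomain _ (Fin.castSucc_injective m) Q u]
    exact hQ u

lemma main : ∀ (n : ℕ) (μ : Fin n → ℕ), Monotone μ → ∀ B : ℕ, (∀ i, μ i ≤ B) →
    ∃ P : MvPolynomial (Fin n) ℤ,
      (∀ d : Fin n →₀ ℕ, 0 ≤ coeff d P) ∧
      (∀ d : Fin n →₀ ℕ, coeff d P ≠ 0 →
        ((∑ j, d j) = ∑ i, μ i ∧ ∀ j, d j ≤ B)) ∧
      alt n (fun i => μ i + (i : ℕ)) = alt n (fun i => (i : ℕ)) * P := by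
  intro n
  induction n with
  | zero =>
    intro μ _ B _
    refine ⟨1, ?_, ?_, ?_⟩
    · intro d
      rw [MvPolynomial.coeff_one]
      split <;> norm_num
    · intro d hd
      rw [MvPolynomial.coeff_one] at hd
      have hd0 : d = 0 := by by_contra h; rw [if_neg (by exact fun hc => h hc.symm)] at hd; exact hd rfl
      subst hd0
      refine ⟨by simp, fun j => j.elim0⟩
    · rw [alt_zero, alt_zero, one_mul]
  | succ m ih =>
    intro μ hμ B hB
    classical
    set g : ℕ → ℕ := fun t => μ ⟨min t m, by omega⟩ with hgdef
    have hgmono : Monotone g := by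
      intro a b hab
      exact hμ (by simp only [Fin.mk_le_mk]; omega)
    have hgadj : ∀ t, g t ≤ g (t+1) := fun t => hgmono (by omega)
    have hgi : ∀ i : Fin (m+1), g (i : ℕ) = μ i := by
      intro i
      have h : (⟨min (i : ℕ) m, by omega⟩ : Fin (m+1)) = i := Fin.ext (by simp; omega)
      exact congrArg μ h
    have hgB : ∀ t, g t ≤ B := fun t => hB _
    set box := Fintype.piFinset (fun i : Fin m => Finset.Icc (g (i : ℕ)) (g ((i : ℕ)+1))) with hboxdef
    have hchoice : ∀ r ∈ box, ∃ Q : MvPolynomial (Fin m) ℤ,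
        (∀ d : Fin m →₀ ℕ, 0 ≤ coeff d Q) ∧
        (∀ d : Fin m →₀ ℕ, coeff d Q ≠ 0 → ((∑ j, d j) = ∑ i, r i ∧ ∀ j, d j ≤ B)) ∧
        alt m (fun i => r i + (i : ℕ)) = alt m (fun i => (i : ℕ)) * Q := by
      intro r hr
      rw [hboxdef, Fintype.mem_piFinset] at hr
      have hrlo : ∀ i : Fin m, g (i : ℕ) ≤ r i := fun i => (Finset.mem_Icc.mp (hr i)).1
      have hrhi : ∀ i : Fin m, r i ≤ g ((i : ℕ)+1) := fun i => (Finset.mem_Icc.mp (hr i)).2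
      have hrmono : Monotone r := by
        intro i j hij
        rcases eq_or_lt_of_le hij with h | h
        · rw [h]
        · calc r i ≤ g ((i : ℕ)+1) := hrhi i
            _ ≤ g (j : ℕ) := hgmono (by have : (i:ℕ) < (j:ℕ) := h; omega)
            _ ≤ r j := hrlo j
      exact ih r hrmono B (fun i => le_trans (hrhi i) (hgB _))
    choose Q hQ1 hQ2 hQ3 using hchoice
    refine ⟨∑ r ∈ box.attach,
      X (Fin.last m) ^ ((∑ i : Fin (m+1), μ i) - ∑ i : Fin m, (r : Fin m → ℕ) i) *
        rename (Fin.castSucc : Fin m → Fin (m+1)) (Q r.1 r.2), ?_, ?_, ?_⟩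
    · -- nonnegativity of coefficients
      intro d
      rw [MvPolynomial.coeff_sum]
      apply Finset.sum_nonneg
      intro r _
      rw [X_pow_eq_monomial, coeff_monomial_mul']
      split
      · rw [one_mul]
        exact rename_coeff_nonneg m _ (hQ1 r.1 r.2) _
      · exact le_rfl
    · -- support conditions
      intro d hd
      rw [MvPolynomial.coeff_sum] at hd
      obtain ⟨r, hrmem, hterm⟩ := Finset.exists_ne_zero_of_sum_ne_zero hd
      set e := (∑ i : Fin (m+1), μ i) - ∑ i : Fin m, (r : Fin m → ℕ) i with he
      rw [X_pow_eq_monomial, coeff_monomial_mul'] at hterm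
      by_cases hle : (Finsupp.single (Fin.last m) e) ≤ d
      swap
      · rw [if_neg hle] at hterm; exact absurd rfl hterm
      rw [if_pos hle, one_mul] at hterm
      obtain ⟨u, hmap, hcu⟩ := coeff_rename_ne_zero _ _ _ hterm
      obtain ⟨hsum_u, hub⟩ := hQ2 r.1 r.2 u hcu
      have hd_eq : Finsupp.mapDomain Fin.castSucc u + Finsupp.single (Fin.last m) e = d := by
        rw [hmap]
        exact tsub_add_cancel_of_le hle
      have hlast_ne : ∀ j : Fin m, Fin.castSucc j ≠ Fin.last m := fun j => (Fin.castSucc_lt_last j).ne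
      have hdcast : ∀ j : Fin m, d (Fin.castSucc j) = u j := by
        intro j
        rw [← hd_eq, Finsupp.add_apply, Finsupp.mapDomain_apply (Fin.castSucc_injective m),
          Finsupp.single_apply, if_neg (fun h => (hlast_ne j) h.symm), add_zero]
      have hnotin : Fin.last m ∉ Set.range (Fin.castSucc : Fin m → Fin (m+1)) := by
        rintro ⟨a, ha⟩
        exact (hlast_ne a) ha
      have hdlast : d (Fin.last m) = e := by
        rw [← hd_eq, Finsupp.add_apply, Finsupp.mapDomain_notin_range _ _ hnotin,
          Finsupp.single_eq_same, zero_add]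
      have hcast_sum : (∑ j : Fin (m+1), d j) = (∑ j : Fin m, u j) + e := by
        rw [Fin.sum_univ_castSucc, hdlast]
        congr 1
        exact Finset.sum_congr rfl fun j _ => hdcast j
      have hr2 : ∀ i : Fin m, (r : Fin m → ℕ) i ∈ Finset.Icc (g (i : ℕ)) (g ((i : ℕ)+1)) :=
        Fintype.mem_piFinset.mp r.2
      have f1 : (∑ i : Fin m, g (i : ℕ)) ≤ ∑ i : Fin m, (r : Fin m → ℕ) i :=
        Finset.sum_le_sum fun i _ => (Finset.mem_Icc.mp (hr2 i)).1
      have f2 : (∑ i : Fin m, (r : Fin m → ℕ) i) ≤ ∑ i : Fin m, g ((i : ℕ)+1) :=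
        Finset.sum_le_sum fun i _ => (Finset.mem_Icc.mp (hr2 i)).2
      have f3 : (∑ i : Fin (m+1), μ i) = (∑ i : Fin m, g (i : ℕ)) + g m := by
        rw [Fin.sum_univ_castSucc]
        congr 1
        · exact Finset.sum_congr rfl fun i _ => by rw [← hgi i.castSucc, Fin.coe_castSucc]
        · rw [← hgi (Fin.last m), Fin.val_last]
      have f4 : (∑ i : Fin (m+1), μ i) = g 0 + ∑ i : Fin m, g ((i : ℕ)+1) := by
        rw [Fin.sum_univ_succ]
        congr 1
        exact Finset.sum_congr rfl fun i _ => by rw [← hgi i.succ, Fin.val_succ]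
      have hgmB : g m ≤ B := hgB m
      constructor
      · omega
      · intro j
        refine Fin.lastCases ?_ (fun j' => ?_) j
        · rw [hdlast]; omega
        · rw [hdcast]; exact hub j'
    · -- the determinant identity
      have hkey := key m g hgadj
      have hgfun : (fun i : Fin (m+1) => g (i : ℕ) + (i : ℕ)) = (fun i => μ i + (i : ℕ)) :=
        funext fun i => by rw [hgi i]
      have hsumg : (∑ i : Fin (m+1), g (i : ℕ)) = ∑ i : Fin (m+1), μ i :=
        Finset.sum_congr rfl fun i _ => hgi i
      rw [hgfun, hsumg] at hkey
      have hkey0 := key m (fun _ => 0) (fun t => le_rfl)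
      have hbox0 : (Fintype.piFinset fun _ : Fin m => Finset.Icc (0:ℕ) 0) = {fun _ => 0} := by
        ext r
        simp [Fintype.mem_piFinset, _root_.funext_iff]
      rw [hbox0, Finset.sum_singleton] at hkey0
      simp only [Finset.sum_const_zero, Nat.sub_zero, pow_zero, one_mul, zero_add] at hkey0
      rw [hkey, ← Finset.sum_attach box (fun r =>
        X (Fin.last m) ^ ((∑ i : Fin (m+1), μ i) - ∑ i : Fin m, r i) *
          ((∏ j : Fin m, (X (Fin.last m) - X j.castSucc)) *
            rename (Fin.castSucc : Fin m → Fin (m+1)) (alt m (fun i => r i + (i : ℕ))))),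
        Finset.mul_sum]
      apply Finset.sum_congr rfl
      intro r _
      rw [hQ3 r.1 r.2, _root_.map_mul, hkey0]
      ring
lemma prodXpow (n : ℕ) (e : Fin n → ℕ) :
    (∏ i, (X i : MvPolynomial (Fin n) ℤ) ^ e i)
      = monomial (Finsupp.equivFunOnFinite.symm e) 1 := by
  classical
  have h : ∀ (t : Finset (Fin n)), (∏ i ∈ t, (X i : MvPolynomial (Fin n) ℤ) ^ e i)
      = monomial (∑ i ∈ t, Finsupp.single i (e i)) 1 := by
    intro t
    induction t using Finset.induction_on with
    | empty => simp
    | insert x t hx ih =>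
      rw [Finset.prod_insert hx, Finset.sum_insert hx, ih, X_pow_eq_monomial,
        monomial_mul, one_mul]
  have h2 : (∑ i : Fin n, Finsupp.single i (e i))
      = (Finsupp.equivFunOnFinite.symm e : Fin n →₀ ℕ) := by
    refine Finsupp.ext fun j => ?_
    rw [Finsupp.finset_sum_apply]
    rw [Finset.sum_eq_single j (fun i _ hij => Finsupp.single_eq_of_ne' hij)
      (fun h => absurd (Finset.mem_univ j) h)]
    simp
  rw [h Finset.univ, h2]

lemma alt_expand (n : ℕ) (γ : Fin n → ℕ) (dd : Fin n →₀ ℕ) (z : ℤ) :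
    alt n γ * monomial dd z
      = ∑ σ : Equiv.Perm (Fin n),
          monomial (Finsupp.equivFunOnFinite.symm (fun i => γ (σ i)) + dd)
            ((Equiv.Perm.sign σ : ℤ) * z) := by
  rw [alt, Matrix.det_apply, Finset.sum_mul]
  apply Finset.sum_congr rfl
  intro σ _
  have h1 : (∏ i, (Matrix.of fun i j : Fin n => (X j : MvPolynomial (Fin n) ℤ) ^ γ i) (σ i) i)
      = ∏ i, (X i : MvPolynomial (Fin n) ℤ) ^ γ (σ i) := rfl
  rw [h1, prodXpow, MvPolynomial.smul_monomial, MvPolynomial.monomial_mul]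
  congr 1
  simp [Units.smul_def]

variable (M n : ℕ)

noncomputable def LW (A : Matrix (Fin M) (Fin n) ℂ) : (Fin n →₀ ℕ) → ℂ :=
  fun dd => ∏ j, (if h : dd j < M then A ⟨dd j, h⟩ j else 0)

noncomputable def Lmap (A : Matrix (Fin M) (Fin n) ℂ) : MvPolynomial (Fin n) ℤ →+ ℂ where
  toFun q := Finsupp.sum (AddMonoidAlgebra.coeff q) fun dd z => z • LW M n A dd
  map_zero' := Finsupp.sum_zero_index
  map_add' p q := by
    show Finsupp.sum (AddMonoidAlgebra.coeff (p + q)) (fun dd z => z • LW M n A dd) = _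
    rw [AddMonoidAlgebra.coeff_add]
    exact Finsupp.sum_add_index' (fun dd => zero_smul ℤ (LW M n A dd))
      (fun dd z1 z2 => add_smul z1 z2 (LW M n A dd))

lemma Lmap_monomial (A : Matrix (Fin M) (Fin n) ℂ) (dd : Fin n →₀ ℕ) (z : ℤ) :
    Lmap M n A (monomial dd z) = z • LW M n A dd := by
  unfold Lmap
  simp only [AddMonoidHom.coe_mk, ZeroHom.coe_mk]
  rw [← single_eq_monomial]
  show Finsupp.sum (Finsupp.single dd z) (fun dd z => z • LW M n A dd) = _
  exact Finsupp.sum_single_index (zero_smul ℤ (LW M n A dd))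

lemma Lcalc (A : Matrix (Fin M) (Fin n) ℂ) (γ : Fin n → ℕ) (dd : Fin n →₀ ℕ) (z : ℤ) :
    Lmap M n A (alt n γ * monomial dd z)
      = z • (Matrix.of fun i j : Fin n =>
          (if h : γ i + dd j < M then A ⟨γ i + dd j, h⟩ j else 0)).det := by
  rw [alt_expand, map_sum, Matrix.det_apply, Finset.smul_sum]
  apply Finset.sum_congr rfl
  intro σ _
  rw [Lmap_monomial]
  have hW : LW M n A (Finsupp.equivFunOnFinite.symm (fun i => γ (σ i)) + dd)
      = ∏ j, (Matrix.of fun i j : Fin n =>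
          (if h : γ i + dd j < M then A ⟨γ i + dd j, h⟩ j else 0)) (σ j) j := by
    unfold LW
    apply Finset.prod_congr rfl
    intro j _
    have hv : (Finsupp.equivFunOnFinite.symm (fun i => γ (σ i)) + dd) j = γ (σ j) + dd j := by
      simp [Finsupp.add_apply]
    simp only [Matrix.of_apply, hv]
  rw [hW, Units.smul_def, mul_comm ((Equiv.Perm.sign σ : ℤ)) z, ← smul_smul]

lemma sm_helper {n M : ℕ} (s : Fin n → Fin M) (hs : StrictMono s) :
    ∀ (k : ℕ) (i j : Fin n), (j : ℕ) = (i : ℕ) + k → (s i : ℕ) + k ≤ (s j : ℕ) := by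
  intro k
  induction k with
  | zero =>
    intro i j h
    have : i = j := Fin.ext (by omega)
    subst this; omega
  | succ k ihk =>
    intro i j h
    have hjlt := j.isLt
    have hlt : (i : ℕ) + k < n := by omega
    have h1 := ihk i ⟨(i : ℕ) + k, hlt⟩ rfl
    have h2 : (⟨(i : ℕ) + k, hlt⟩ : Fin n) < j := by
      rw [Fin.lt_def]; simp; omega
    have h3 := hs h2
    rw [Fin.lt_def] at h3
    omega

end Stmt0

open MvPolynomial Matrix Finset Stmt0



/-- Every maximal minor of an `M × n` complex matrix `A` with row set
given by a strictly monotone `s : Fin n → Fin M` is a nonnegative-integer linear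
combination, with coefficients independent of `A`, of row-consecutive `n`-minors of `A`.
The coefficient function `c` is finitely supported, and `c p ≠ 0` forces
`p j + n ≤ M` for all `j` and `∑ j, p j = ∑ i, (s i - i)`. -/
theorem stmt_0 (M n : ℕ) (hn : 1 ≤ n) (hnM : n ≤ M)
    (s : Fin n → Fin M) (hs : StrictMono s) :
    ∃ c : (Fin n → ℕ) →₀ ℕ,
      (∀ p, c p ≠ 0 →
        (∀ j, p j + n ≤ M) ∧ (∑ j, p j) = ∑ i : Fin n, ((s i : ℕ) - (i : ℕ))) ∧
      ∀ A : Matrix (Fin M) (Fin n) ℂ,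
        (A.submatrix s id).det =
          ∑ p ∈ c.support, (c p : ℂ) *
            (if h : ∀ j, p j + n ≤ M then
              Matrix.det (Matrix.of fun i j : Fin n =>
                A ⟨p j + (i : ℕ), by have h1 := h j; have h2 := i.isLt; omega⟩ j)
            else 0) := by
  
  classical
  have hle : ∀ i : Fin n, (i : ℕ) ≤ (s i : ℕ) := by
    intro i
    have h0 : (0 : ℕ) < n := hn
    have := sm_helper s hs (i : ℕ) ⟨0, h0⟩ i (by simp)
    omega
  have hμmono : Monotone (fun i : Fin n => (s i : ℕ) - (i : ℕ)) := by
    intro i j hij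
    have hv : (i : ℕ) ≤ (j : ℕ) := hij
    have := sm_helper s hs ((j : ℕ) - (i : ℕ)) i j (by omega)
    have h1 := hle i
    have h2 := hle j
    simp only
    omega
  have hB : ∀ i : Fin n, (s i : ℕ) - (i : ℕ) ≤ M - n := by
    intro i
    have h1 := sm_helper s hs ((n-1) - (i : ℕ)) i ⟨n-1, by omega⟩ (by simp; omega)
    have h2 := (s ⟨n-1, by omega⟩).isLt
    have h3 := i.isLt
    omega
  obtain ⟨P, hpos, hsupp, hid⟩ := main n (fun i => (s i : ℕ) - (i : ℕ)) hμmono (M - n) hB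
  have hβ : (fun i : Fin n => ((s i : ℕ) - (i : ℕ)) + (i : ℕ)) = fun i => (s i : ℕ) :=
    funext fun i => by have := hle i; omega
  rw [hβ] at hid
  set eqv := (Finsupp.equivFunOnFinite : (Fin n →₀ ℕ) ≃ (Fin n → ℕ)) with heqv
  set c : (Fin n → ℕ) →₀ ℕ := Finsupp.onFinset (P.support.image eqv)
    (fun p => (coeff (eqv.symm p) P).toNat)
    (fun p hp => Finset.mem_image.mpr ⟨eqv.symm p, by
      rw [mem_support_iff]
      intro h
      apply hp
      show (coeff (eqv.symm p) P).toNat = 0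
      rw [h]
      rfl, by simp⟩) with hc
  have happ : ∀ (p : Fin n → ℕ), c p = (coeff (eqv.symm p) P).toNat := fun p => rfl
  have hsymm_app : ∀ (p : Fin n → ℕ) (j : Fin n), (eqv.symm p) j = p j := fun p j => rfl
  refine ⟨c, ?_, ?_⟩
  · intro p hp
    have hco : coeff (eqv.symm p) P ≠ 0 := by
      intro h
      apply hp
      rw [happ p, h]
      rfl
    obtain ⟨hsum, hbd⟩ := hsupp (eqv.symm p) hco
    constructor
    · intro j
      have := hbd j
      rw [hsymm_app p j] at this
      omega
    · rw [← hsum]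
      exact Finset.sum_congr rfl fun j _ => (hsymm_app p j).symm
  · intro A
    have hLHS : Lmap M n A (alt n (fun i => (s i : ℕ))) = (A.submatrix s id).det := by
      have h1 : alt n (fun i => (s i : ℕ))
          = alt n (fun i => (s i : ℕ)) * monomial 0 1 := by
        rw [monomial_zero', C_1, mul_one]
      rw [h1, Lcalc, one_smul]
      congr 1
      refine Matrix.ext fun i j => ?_
      simp only [Matrix.of_apply, Finsupp.coe_zero, Pi.zero_apply, add_zero,
        Matrix.submatrix_apply, id_eq]
      rw [dif_pos (s i).isLt]
    have hsupport_eq : c.support = P.support.image eqv := by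
      ext p
      rw [Finsupp.mem_support_iff]
      constructor
      · intro hp
        have hco : coeff (eqv.symm p) P ≠ 0 := by
          intro h
          apply hp
          rw [happ p, h]
          rfl
        exact Finset.mem_image.mpr ⟨eqv.symm p, Finsupp.mem_support_iff.mpr hco, by simp⟩
      · intro hmem
        obtain ⟨dd, hdd, hdp⟩ := Finset.mem_image.mp hmem
        have hsd : eqv.symm p = dd := by rw [← hdp]; simp
        rw [happ p, hsd]
        have h0 := hpos dd
        have hne := Finsupp.mem_support_iff.mp hdd
        intro hcon
        rw [Int.toNat_eq_zero] at hcon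
        exact hne (le_antisymm hcon h0)
    calc (A.submatrix s id).det
        = Lmap M n A (alt n (fun i => (s i : ℕ))) := hLHS.symm
      _ = Lmap M n A (alt n (fun i => (i : ℕ)) * P) := by rw [hid]
      _ = ∑ dd ∈ P.support, Lmap M n A (alt n (fun i => (i : ℕ)) * monomial dd (coeff dd P)) := by
          rw [show alt n (fun i => (i : ℕ)) * P
              = ∑ dd ∈ P.support, alt n (fun i => (i : ℕ)) * monomial dd (coeff dd P) from by
            rw [← Finset.mul_sum, support_sum_monomial_coeff], map_sum]
      _ = ∑ dd ∈ P.support, (coeff dd P) • (Matrix.of fun i j : Fin n =>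
            (if h : (i : ℕ) + dd j < M then A ⟨(i : ℕ) + dd j, h⟩ j else 0)).det := by
          exact Finset.sum_congr rfl fun dd _ => Lcalc M n A _ dd _
      _ = ∑ p ∈ c.support, (c p : ℂ) *
            (if h : ∀ j, p j + n ≤ M then
              Matrix.det (Matrix.of fun i j : Fin n =>
                A ⟨p j + (i : ℕ), by have h1 := h j; have h2 := i.isLt; omega⟩ j)
            else 0) := by
          rw [hsupport_eq, Finset.sum_image (fun x _ y _ h => eqv.injective h)]
          apply Finset.sum_congr rfl
          intro dd hdd
          obtain ⟨hsum', hbd'⟩ := hsupp dd (Finsupp.mem_support_iff.mp hdd)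
          have heqdd : ∀ j, eqv dd j = dd j := fun j => rfl
          have hpj : ∀ j, eqv dd j + n ≤ M := by
            intro j
            have := hbd' j
            have h2 := heqdd j
            omega
          rw [dif_pos hpj]
          have hcv : (c (eqv dd) : ℂ) = ((coeff dd P : ℤ) : ℂ) := by
            rw [happ (eqv dd), show eqv.symm (eqv dd) = dd from by simp,
              ← Int.toNat_of_nonneg (hpos dd)]
            exact (Int.cast_natCast _).symm
          rw [hcv, zsmul_eq_mul]
          congr 1
          congr 1
          refine Matrix.ext fun i j => ?_
          simp only [Matrix.of_apply]
          have hij : (i : ℕ) + dd j < M := by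
            have := hbd' j
            have h2 := i.isLt
            omega
          rw [dif_pos hij]
          congr 1
          simp only [Fin.mk.injEq]
          have := heqdd j
          omega
end

section
/- Let n ∈ ℕ, x ∈ ℂ^n, and μ : Fin n → ℕ. Let P(μ) denote the finite set of all distinct rearrangements of μ, i.e., the image of the map σ ↦ μ ∘ σ over all permutations σ of Fin n. Then ∑_{p ∈ P(μ)} det(V_p) = det(V) · ∑_{p ∈ P(μ)} ∏_{j} x_j^{p_j}, where V_p is the n×n matrix whose (i,j) entry is x_j^{p_j + i} (0-indexed i ∈ {0,…,n−1}) and V is the n×n Vandermonde matrix whose (i,j) entry is x_j^{i}. -/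
/-- The identity `d_μ(x) = |V(x)| · m_μ(x)`: summing, over all distinct
rearrangements `p` of the exponent tuple `μ`, the determinants of the matrices whose
`(i,j)` entry is `x j ^ (p j + i)` yields the Vandermonde determinant (entries `x j ^ i`)
times the monomial symmetric function `∑_p ∏_j x j ^ p j`. -/
theorem stmt_4 (n : ℕ) (x : Fin n → ℂ) (μ : Fin n → ℕ) :
    ∑ p ∈ Finset.image (fun σ : Equiv.Perm (Fin n) => μ ∘ σ) Finset.univ,
      Matrix.det (Matrix.of fun i j : Fin n => x j ^ (p j + (i : ℕ))) =
    Matrix.det (Matrix.of fun i j : Fin n => x j ^ (i : ℕ)) *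
      ∑ p ∈ Finset.image (fun σ : Equiv.Perm (Fin n) => μ ∘ σ) Finset.univ,
        ∏ j, x j ^ p j := by
  rw [Finset.mul_sum]
  refine Finset.sum_congr rfl fun p _ => ?_
  have : (Matrix.of fun i j : Fin n => x j ^ (p j + (i : ℕ))) =
      Matrix.of fun i j : Fin n => (fun j => x j ^ p j) j * (Matrix.of fun i j : Fin n => x j ^ (i : ℕ)) i j := by
    ext i j
    simp [pow_add]
  rw [this, Matrix.det_mul_row]
  ring
end

section
/- Let M, n ∈ ℕ with 1 ≤ n ≤ M and let s : Fin n → Fin M be strictly monotone. Then there exists a finitely supported function c : (Fin n → ℕ) → ℕ, depending only on M, n and s, such that (i) c(p) ≠ 0 implies ∑_j p_j = ∑_i (s_i − i), and (ii) for every x ∈ ℂ^n, det(S) = det(V) · ∑_p c(p) · ∏_j x_j^{p_j}, where S is the n×n matrix whose (i,j) entry is x_j^{s_i} and V is the n×n Vandermonde matrix whose (i,j) entry is x_j^{i} (0-indexed i, j). In particular, the alternant det(S) is divisible by the Vandermonde determinant, and the quotient is a symmetric polynomial with nonnegative integer coefficients. -/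
open Finset Matrix

private lemma strictMono_le_apply_aux {n : ℕ} {s : Fin n → ℕ} (hs : StrictMono s) :
    ∀ i : Fin n, (i : ℕ) ≤ s i := by
  suffices h : ∀ k, ∀ i : Fin n, (i : ℕ) = k → k ≤ s i from fun i => h _ i rfl
  intro k
  induction k with
  | zero => intro i _; exact Nat.zero_le _
  | succ k ih =>
    intro i hi
    have hk : k < n := by omega
    have h1 : (⟨k, hk⟩ : Fin n) < i := by simp [Fin.lt_def, hi]
    have h2 := hs h1
    have h3 := ih ⟨k, hk⟩ rfl
    omega

private lemma telescope_aux (a b : ℂ) {u v : ℕ} (huv : u ≤ v) :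
    (a - b) * ∑ t ∈ Finset.Ico u v, a ^ t * b ^ (v - 1 - t) =
      a ^ v - a ^ u * b ^ (v - u) := by
  have h1 : ∑ t ∈ Finset.Ico u v, a ^ t * b ^ (v - 1 - t)
      = a ^ u * ∑ i ∈ Finset.range (v - u), a ^ i * b ^ (v - u - 1 - i) := by
    rw [Finset.sum_Ico_eq_sum_range, Finset.mul_sum]
    refine Finset.sum_congr rfl fun i _ => ?_
    have he : v - 1 - (u + i) = v - u - 1 - i := by omega
    rw [he, pow_add]; ring
  have h2 := geom_sum₂_mul a b (v - u)
  calc (a - b) * ∑ t ∈ Finset.Ico u v, a ^ t * b ^ (v - 1 - t)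
      = a ^ u * ((∑ i ∈ Finset.range (v - u), a ^ i * b ^ (v - u - 1 - i)) * (a - b)) := by
        rw [h1]; ring
    _ = a ^ u * (a ^ (v - u) - b ^ (v - u)) := by rw [h2]
    _ = a ^ v - a ^ u * b ^ (v - u) := by
        rw [mul_sub, ← pow_add, Nat.add_sub_cancel' huv]

/-- Splitting off the last variable of a Vandermonde determinant. -/
private lemma vandermonde_split {n : ℕ} (x : Fin (n + 1) → ℂ) :
    Matrix.det (Matrix.of fun i j : Fin (n + 1) => x j ^ (i : ℕ)) =
      Matrix.det (Matrix.of fun i j : Fin n => x j.castSucc ^ (i : ℕ)) *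
        ∏ j : Fin n, (x (Fin.last n) - x j.castSucc) := by
  have hIoi : ∀ (g : Fin (n+1) → ℂ) (i : Fin n),
      ∏ j ∈ Ioi i.castSucc, g j = (∏ j ∈ Ioi i, g j.castSucc) * g (Fin.last n) := by
    intro g i
    have hset : Ioi i.castSucc = insert (Fin.last n) ((Ioi i).map Fin.castSuccEmb) := by
      ext j
      simp only [mem_Ioi, Finset.mem_insert, Finset.mem_map, Fin.castSuccEmb]
      constructor
      · intro hj
        rcases Fin.eq_castSucc_or_eq_last j with ⟨j', rfl⟩ | rfl
        · exact Or.inr ⟨j', by simpa [Fin.castSucc_lt_castSucc_iff] using hj, rfl⟩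
        · exact Or.inl rfl
      · rintro (rfl | ⟨j', hj', rfl⟩)
        · exact Fin.castSucc_lt_last i
        · exact Fin.castSucc_lt_castSucc_iff.mpr hj'
    have hnm : Fin.last n ∉ (Ioi i).map Fin.castSuccEmb := by
      simp only [Finset.mem_map]
      rintro ⟨j', _, hj'⟩
      have : (Fin.castSuccEmb j' : Fin (n+1)) = j'.castSucc := rfl
      rw [this] at hj'
      exact (Fin.castSucc_lt_last j').ne hj'
    rw [hset, Finset.prod_insert hnm, Finset.prod_map, mul_comm]
    congr 1
  have h1 : (Matrix.of fun i j : Fin (n+1) => x j ^ (i : ℕ)) = (Matrix.vandermonde x)ᵀ := by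
    ext i j; rfl
  have h2 : (Matrix.of fun i j : Fin n => x j.castSucc ^ (i : ℕ))
      = (Matrix.vandermonde fun j : Fin n => x j.castSucc)ᵀ := by
    ext i j; rfl
  rw [h1, h2, Matrix.det_transpose, Matrix.det_transpose, Matrix.det_vandermonde,
    Matrix.det_vandermonde]
  rw [Fin.prod_univ_castSucc]
  have hlast : ∏ j ∈ Ioi (Fin.last n), (x j - x (Fin.last n)) = 1 := by
    have : Ioi (Fin.last n) = (∅ : Finset (Fin (n+1))) := by
      apply Finset.eq_empty_of_forall_notMem
      intro j hj
      exact absurd (mem_Ioi.mp hj) (not_lt.mpr (Fin.le_last j))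
    rw [this, Finset.prod_empty]
  rw [hlast, mul_one]
  rw [← Finset.prod_mul_distrib]
  refine Finset.prod_congr rfl fun i _ => ?_
  exact hIoi (fun j => x j - x i.castSucc) i

/-- The key induction: alternant = Vandermonde × monomial-positive polynomial. -/
private theorem key_alternant : ∀ (n : ℕ) (s : Fin n → ℕ), StrictMono s →
    ∃ c : (Fin n → ℕ) →₀ ℕ,
      (∀ p, c p ≠ 0 → (∑ j, p j) = ∑ i : Fin n, (s i - (i : ℕ))) ∧
      ∀ x : Fin n → ℂ,
        Matrix.det (Matrix.of fun i j : Fin n => x j ^ s i) =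
        Matrix.det (Matrix.of fun i j : Fin n => x j ^ (i : ℕ)) *
          ∑ p ∈ c.support, (c p : ℂ) * ∏ j, x j ^ p j := by
  intro n
  induction n with
  | zero =>
    intro s _
    refine ⟨Finsupp.single (fun _ => 0) 1, ?_, ?_⟩
    · intro p _; simp
    · intro x
      rw [Finsupp.support_single_ne_zero _ one_ne_zero]
      simp [Matrix.det_fin_zero]
  | succ n ih =>
    intro s hs
    classical
    -- choose coefficient functions for smaller alternants
    have ihC : ∀ t : Fin n → ℕ, ∃ c : (Fin n → ℕ) →₀ ℕ, StrictMono t →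
        ((∀ p, c p ≠ 0 → (∑ j, p j) = ∑ i : Fin n, (t i - (i : ℕ))) ∧
         ∀ y : Fin n → ℂ,
           Matrix.det (Matrix.of fun i j : Fin n => y j ^ t i) =
           Matrix.det (Matrix.of fun i j : Fin n => y j ^ (i : ℕ)) *
             ∑ p ∈ c.support, (c p : ℂ) * ∏ j, y j ^ p j) := by
      intro t
      by_cases h : StrictMono t
      · obtain ⟨c, h1, h2⟩ := ih t h
        exact ⟨c, fun _ => ⟨h1, h2⟩⟩
      · exact ⟨0, fun h' => absurd h' h⟩
    choose C hC using ihC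
    set T : Finset (Fin n → ℕ) :=
      Fintype.piFinset fun i => Finset.Ico (s i.castSucc) (s i.succ) with hT
    have hmemT : ∀ t, t ∈ T ↔ ∀ i, s i.castSucc ≤ t i ∧ t i < s i.succ := by
      intro t; simp [hT, Fintype.mem_piFinset, Finset.mem_Ico]
    have hmono : ∀ t ∈ T, StrictMono t := by
      intro t ht i j hij
      rw [hmemT] at ht
      have h1 := (ht i).2
      have h2 := (ht j).1
      have h3 : s i.succ ≤ s j.castSucc := by
        apply hs.monotone
        have hij' : (i : ℕ) < (j : ℕ) := hij
        rw [Fin.le_def]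
        simp only [Fin.val_succ, Fin.coe_castSucc]
        omega
      omega
    set E : (Fin n → ℕ) → ℕ := fun t => s 0 + ∑ i, (s i.succ - 1 - t i) with hE
    set c : (Fin (n+1) → ℕ) →₀ ℕ :=
      ∑ t ∈ T, Finsupp.mapDomain (fun q => Fin.snoc q (E t)) (C t) with hc
    refine ⟨c, ?_, ?_⟩
    · -- degree condition
      intro p hp
      have hex : ∃ t ∈ T, Finsupp.mapDomain (fun q => Fin.snoc q (E t)) (C t) p ≠ 0 := by
        by_contra h
        push_neg at h
        apply hp
        rw [hc, Finsupp.finset_sum_apply]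
        exact Finset.sum_eq_zero h
      obtain ⟨t, ht, htp⟩ := hex
      obtain ⟨q, hq, hpq⟩ := Finset.mem_image.mp
        (Finsupp.mapDomain_support (Finsupp.mem_support_iff.mpr htp))
      subst hpq
      have hmt := hmono t ht
      have hqsum : (∑ j, q j) = ∑ i : Fin n, (t i - (i : ℕ)) :=
        (hC t hmt).1 q (Finsupp.mem_support_iff.mp hq)
      rw [hmemT] at ht
      have hsum : (∑ j, Fin.snoc q (E t) j) = (∑ j, q j) + E t := by
        rw [Fin.sum_univ_castSucc]
        simp only [Fin.snoc_castSucc, Fin.snoc_last]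
      rw [hsum, hqsum, hE]
      rw [Fin.sum_univ_succ]
      have hcomb : (∑ i : Fin n, (t i - (i : ℕ))) + ∑ i : Fin n, (s i.succ - 1 - t i)
          = ∑ i : Fin n, (s i.succ - ((i.succ : Fin (n+1)) : ℕ)) := by
        rw [← Finset.sum_add_distrib]
        refine Finset.sum_congr rfl fun i _ => ?_
        have h1 := (ht i).1
        have h2 := (ht i).2
        have h3 : ((i.castSucc : Fin (n+1)) : ℕ) ≤ s i.castSucc :=
          strictMono_le_apply_aux hs i.castSucc
        simp only [Fin.coe_castSucc] at h3
        simp only [Fin.val_succ]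
        omega
      simp only [Fin.val_zero, Nat.sub_zero]
      omega
    · -- determinant identity
      intro x
      set z : ℂ := x (Fin.last n) with hz
      set y : Fin n → ℂ := fun j => x j.castSucc with hy
      -- the row-reduced matrix
      set B : Matrix (Fin (n+1)) (Fin (n+1)) ℂ := Matrix.of fun i j =>
        Fin.cases (x j ^ s 0)
          (fun i' => x j ^ s i'.succ - x j ^ s i'.castSucc * z ^ (s i'.succ - s i'.castSucc)) i
        with hB
      have hAB : Matrix.det (Matrix.of fun i j : Fin (n+1) => x j ^ s i) = Matrix.det B := by
        apply Matrix.det_eq_of_forall_row_eq_smul_add_pred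
          (c := fun i => z ^ (s i.succ - s i.castSucc))
        · intro j; simp [hB]
        · intro i j
          simp only [hB, Matrix.of_apply, Fin.cases_succ]
          ring
      -- geometric-sum matrix
      set G : Matrix (Fin n) (Fin n) ℂ := Matrix.of fun i j =>
        ∑ t ∈ Finset.Ico (s i.castSucc) (s i.succ), y j ^ t * z ^ (s i.succ - 1 - t) with hG
      have hBD : Matrix.det B = (-1 : ℂ) ^ n * (z ^ s 0 *
          Matrix.det (Matrix.of fun i j : Fin n => (y j - z) * G i j)) := by
        rw [Matrix.det_succ_column B (Fin.last n)]
        rw [Fintype.sum_eq_single (0 : Fin (n+1))]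
        · have hsub : B.submatrix (Fin.succAbove 0) (Fin.succAbove (Fin.last n))
              = Matrix.of fun i j : Fin n => (y j - z) * G i j := by
            ext i j
            simp only [Matrix.submatrix_apply, Fin.succAbove_zero, Fin.succAbove_last, hB,
              Matrix.of_apply, Fin.cases_succ, hG]
            exact (telescope_aux (y j) z (hs (Fin.castSucc_lt_succ (i := i))).le).symm
          rw [hsub]
          simp only [hB, Matrix.of_apply, Fin.cases_zero, Fin.val_zero, Fin.val_last, zero_add]
          ring
        · intro i hi
          obtain ⟨i', rfl⟩ := Fin.exists_succ_eq.mpr hi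
          have hzero : B i'.succ (Fin.last n) = 0 := by
            simp only [hB, Matrix.of_apply, Fin.cases_succ, ← hz]
            rw [← pow_add, Nat.add_sub_cancel' (hs (Fin.castSucc_lt_succ (i := i'))).le, sub_self]
          rw [hzero]
          ring
      have hDG : Matrix.det (Matrix.of fun i j : Fin n => (y j - z) * G i j)
          = (∏ j, (y j - z)) * Matrix.det G := by
        have := Matrix.det_mul_row (fun j => y j - z) G
        convert this using 2
      have hGsum : Matrix.det G = ∑ r ∈ T,
          (∏ i, z ^ (s i.succ - 1 - r i)) * Matrix.det (Matrix.of fun i j : Fin n => y j ^ r i) := by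
        have hrow : (G : Matrix (Fin n) (Fin n) ℂ) = fun i =>
            ∑ t ∈ Finset.Ico (s i.castSucc) (s i.succ),
              (fun j => y j ^ t * z ^ (s i.succ - 1 - t)) := by
          funext i j
          rw [Finset.sum_apply]
          rfl
        have hdet : Matrix.det G = Matrix.detRowAlternating G := rfl
        rw [hdet, hrow]
        rw [show (Matrix.detRowAlternating : ((Fin n → ℂ) [⋀^Fin n]→ₗ[ℂ] ℂ))
            (fun i => ∑ t ∈ Finset.Ico (s i.castSucc) (s i.succ),
              (fun j => y j ^ t * z ^ (s i.succ - 1 - t)))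
          = ∑ r ∈ T, Matrix.detRowAlternating
              (fun i => (fun j => y j ^ r i * z ^ (s i.succ - 1 - r i))) from
          Matrix.detRowAlternating.toMultilinearMap.map_sum_finset
            (fun i t => fun j => y j ^ t * z ^ (s i.succ - 1 - t))
            (fun i => Finset.Ico (s i.castSucc) (s i.succ))]
        refine Finset.sum_congr rfl fun r _ => ?_
        have h1 : (Matrix.detRowAlternating
            (fun i => (fun j => y j ^ r i * z ^ (s i.succ - 1 - r i))) : ℂ)
            = Matrix.det (Matrix.of fun i j : Fin n =>
                z ^ (s i.succ - 1 - r i) * (y j ^ r i)) := by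
          congr 1
          ext i j
          exact mul_comm _ _
        rw [h1]; exact Matrix.det_mul_column _ (Matrix.of fun i j => y j ^ r i)
      -- the inner Schur polynomials
      set Q : (Fin n → ℕ) → ℂ := fun t => ∑ q ∈ (C t).support, ((C t) q : ℂ) * ∏ j, y j ^ q j
        with hQ
      have hIH : ∀ r ∈ T, Matrix.det (Matrix.of fun i j : Fin n => y j ^ r i)
          = Matrix.det (Matrix.of fun i j : Fin n => y j ^ (i : ℕ)) * Q r := by
        intro r hr
        exact (hC r (hmono r hr)).2 y
      -- assemble left side
      have hL : Matrix.det (Matrix.of fun i j : Fin (n+1) => x j ^ s i)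
          = (∏ j, (z - y j)) * ∑ r ∈ T, z ^ E r *
            (Matrix.det (Matrix.of fun i j : Fin n => y j ^ (i : ℕ)) * Q r) := by
        rw [hAB, hBD, hDG, hGsum]
        rw [Finset.mul_sum, Finset.mul_sum, Finset.mul_sum, Finset.mul_sum]
        refine Finset.sum_congr rfl fun r hr => ?_
        rw [hIH r hr]
        have hzE : z ^ E r = z ^ s 0 * ∏ i, z ^ (s i.succ - 1 - r i) := by
          rw [hE, Finset.prod_pow_eq_pow_sum, ← pow_add]
        have hprod : ∏ j : Fin n, (z - y j) = (-1 : ℂ) ^ n * ∏ j : Fin n, (y j - z) := by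
          calc ∏ j : Fin n, (z - y j) = ∏ j : Fin n, (-1 : ℂ) * (y j - z) := by
                refine Finset.prod_congr rfl fun j _ => by ring
            _ = (-1 : ℂ) ^ n * ∏ j : Fin n, (y j - z) := by
                rw [Finset.prod_mul_distrib, Finset.prod_const, Finset.card_univ,
                  Fintype.card_fin]
        rw [hzE, hprod]
        ring
      -- right side sum
      have hRS : (∑ p ∈ c.support, ((c p : ℕ) : ℂ) * ∏ j, x j ^ p j)
          = ∑ t ∈ T, z ^ E t * Q t := by
        have h0 : ∀ p : Fin (n+1) → ℕ, ((0 : ℕ) : ℂ) * ∏ j, x j ^ p j = 0 := by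
          intro p; simp
        have hadd : ∀ (p : Fin (n+1) → ℕ) (k₁ k₂ : ℕ),
            ((k₁ + k₂ : ℕ) : ℂ) * ∏ j, x j ^ p j
              = ((k₁ : ℕ) : ℂ) * ∏ j, x j ^ p j + ((k₂ : ℕ) : ℂ) * ∏ j, x j ^ p j := by
          intro p k₁ k₂; push_cast; ring
        rw [show (∑ p ∈ c.support, ((c p : ℕ) : ℂ) * ∏ j, x j ^ p j)
          = c.sum (fun p k => (k : ℂ) * ∏ j, x j ^ p j) from rfl]
        rw [hc, ← Finsupp.sum_finsetSum_index h0 hadd]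
        refine Finset.sum_congr rfl fun t _ => ?_
        rw [Finsupp.sum_mapDomain_index (fun q => h0 _) (fun q k₁ k₂ => hadd _ k₁ k₂)]
        have hmon : ∀ q : Fin n → ℕ,
            (∏ j, x j ^ (Fin.snoc q (E t) : Fin (n+1) → ℕ) j)
              = (∏ j, y j ^ q j) * z ^ E t := by
          intro q
          rw [Fin.prod_univ_castSucc]
          simp [hy, hz]
        rw [hQ]
        rw [show ((C t).sum fun q k => (k : ℂ) * ∏ j, x j ^ (Fin.snoc q (E t) : Fin (n+1) → ℕ) j)
            = ∑ q ∈ (C t).support, ((C t) q : ℂ) *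
                ∏ j, x j ^ (Fin.snoc q (E t) : Fin (n+1) → ℕ) j from rfl]
        rw [Finset.mul_sum]
        refine Finset.sum_congr rfl fun q _ => ?_
        rw [hmon q]
        ring
      rw [hL, hRS, vandermonde_split x]
      rw [Finset.mul_sum, Finset.mul_sum]
      refine Finset.sum_congr rfl fun t _ => ?_
      simp only [← hy, ← hz]
      ring

/-- The generalized Vandermonde minor (alternant) with strictly increasing
row exponents `s 0 < s 1 < … < s (n-1)` equals the Vandermonde determinant times a
monomial-positive symmetric polynomial: there are nonnegative integer coefficients `c p`,
finitely supported, independent of `x`, vanishing unless `∑ j, p j = ∑ i, (s i - i)`,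
such that `det (x j ^ s i) = det (x j ^ i) * ∑_p c p * ∏_j x j ^ p j` for all `x : ℂⁿ`. -/
theorem stmt_5 (M n : ℕ) (hn : 1 ≤ n) (hnM : n ≤ M)
    (s : Fin n → Fin M) (hs : StrictMono s) :
    ∃ c : (Fin n → ℕ) →₀ ℕ,
      (∀ p, c p ≠ 0 → (∑ j, p j) = ∑ i : Fin n, ((s i : ℕ) - (i : ℕ))) ∧
      ∀ x : Fin n → ℂ,
        Matrix.det (Matrix.of fun i j : Fin n => x j ^ (s i : ℕ)) =
        Matrix.det (Matrix.of fun i j : Fin n => x j ^ (i : ℕ)) *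
          ∑ p ∈ c.support, (c p : ℂ) * ∏ j, x j ^ p j := by
  exact key_alternant n (fun i => (s i : ℕ)) (fun i j hij => by
    exact_mod_cast (Fin.val_strictMono.comp hs) hij)
end

section
/- Let g : ℤ → ℂ, t ∈ ℤ, and let r, s ∈ ℕ with 2 ≤ r ≤ s. Then det [[g(t), g(t+r−1)], [g(t+s−1), g(t+s+r−2)]] = ∑_{i=0}^{r−2} det [[g(t+i), g(t+s+r−3−i)], [g(t+i+1), g(t+s+r−2−i)]]. That is, the 2-minor of the Hankel array with rows {t, t+s−1} and columns {0, r−1} is a sum of 2-minors whose two columns each consist of two consecutive values of g. -/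
/-- The 2-minor of the Hankel array of `g` with rows `{t, t+s-1}` and
columns `{0, r-1}` decomposes as a telescoping sum of 2-minors whose two columns each
consist of two consecutive values of `g`. -/
theorem stmt_6 (g : ℤ → ℂ) (t : ℤ) (r s : ℕ) (hr : 2 ≤ r) (hrs : r ≤ s) :
    Matrix.det !![g t, g (t + r - 1); g (t + s - 1), g (t + s + r - 2)] =
    ∑ i ∈ Finset.range (r - 1),
      Matrix.det !![g (t + i), g (t + s + r - 3 - i);
                    g (t + i + 1), g (t + s + r - 2 - i)] := by
  set f : ℕ → ℂ := fun i => g (t + i) * g (t + s + r - 2 - i) with hf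
  have key : ∀ i ∈ Finset.range (r - 1),
      Matrix.det !![g (t + i), g (t + s + r - 3 - i);
                    g (t + i + 1), g (t + s + r - 2 - i)] = f i - f (i + 1) := by
    intro i _
    simp only [hf, Matrix.det_fin_two_of]
    push_cast
    ring_nf
  rw [Finset.sum_congr rfl key, Finset.sum_range_sub']
  have h1 : (↑(r - 1) : ℤ) = (r : ℤ) - 1 := by
    have := hr; omega
  simp only [hf, Matrix.det_fin_two_of, Nat.cast_zero, h1]
  ring_nf
end
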